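/- arXiv:2210.11054 — 4 statements merged into one kernel-verified Lean document; each statement's English description precedes it below -/
import Mathlib

section
/- Let L_BC = −∑_{(u,i)∈O⁺} log[ exp(cos(θ_ui + M_ui)/τ) / (exp(cos(θ_ui + M_ui)/τ) + ∑_{j∈N_u} exp(cos θ_uj/τ)) ] be the BC loss. Suppose m ∈ ℝ satisfies cos(θ_ui + M_ui) ≤ ⟨v_u, v_i⟩ − m for every (u,i) ∈ O⁺. Then L_BC ≥ ∑_{(u,i)∈O⁺} [ ‖v_u − v_i‖²/(2τ) + m/τ + log|N_u| − (1/(2τ|N_u|)) ∑_{j∈N_u} ‖v_u − v_j‖² ]; that is, the BC loss is bounded below by a compactness term (sum of squared distances of positive user–item pairs) minus a dispersion term (average squared distances from each user to its negative items), up to explicit constants. -/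
open Real BigOperators

/-!
On the unit sphere `cos θ_ui = ⟪v_u, v_i⟫ = 1 - ‖v_u - v_i‖² / 2`, so every cosine in the loss is an
affine function of a squared distance. Each summand of `L_BC` is `-a + log (exp a + ∑ⱼ exp bⱼ)`;
dropping `exp a` and applying Jensen's inequality for `exp` to the uniform average over `N_u`
bounds it below by `-a + log |N_u| + mean bⱼ`, and the margin hypothesis bounds `-a` below.
-/

open Finset

theorem Real.log_card_add_sum_div_card_le_log_sum_exp {ι : Type*} {s : Finset ι}
    (hs : s.Nonempty) (x : ι → ℝ) :
    log #s + (∑ j ∈ s, x j) / #s ≤ log (∑ j ∈ s, exp (x j)) := by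
  have hcard : (0 : ℝ) < #s := by exact_mod_cast hs.card_pos
  have hjensen : exp (∑ j ∈ s, (#s : ℝ)⁻¹ * x j) ≤ ∑ j ∈ s, (#s : ℝ)⁻¹ * exp (x j) :=
    convexOn_exp.map_sum_le (fun _ _ => by positivity)
      (by simp [mul_inv_cancel₀ hcard.ne']) (fun _ _ => Set.mem_univ _)
  rw [← mul_sum, ← mul_sum, ← div_eq_inv_mul, ← div_eq_inv_mul] at hjensen
  have hsum : 0 < ∑ j ∈ s, exp (x j) := sum_pos (fun j _ => exp_pos _) hs
  have hlog := log_le_log (exp_pos _) hjensen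
  rw [log_exp, log_div hsum.ne' hcard.ne'] at hlog
  linarith

theorem Real.log_card_add_sum_div_card_sub_le_neg_log_softmax {ι : Type*} {s : Finset ι}
    (hs : s.Nonempty) (a : ℝ) (b : ι → ℝ) :
    log #s + (∑ j ∈ s, b j) / #s - a ≤ -log (exp a / (exp a + ∑ j ∈ s, exp (b j))) := by
  have hsum : 0 < ∑ j ∈ s, exp (b j) := sum_pos (fun j _ => exp_pos _) hs
  rw [log_div (exp_pos a).ne' (by positivity), log_exp]
  have hdrop := log_le_log hsum (le_add_of_nonneg_left (exp_pos a).le)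
  linarith [log_card_add_sum_div_card_le_log_sum_exp hs b]

theorem real_inner_eq_one_sub_norm_sub_sq_div_two {F : Type*} [NormedAddCommGroup F]
    [InnerProductSpace ℝ F] {x y : F} (hx : ‖x‖ = 1) (hy : ‖y‖ = 1) :
    inner ℝ x y = 1 - ‖x - y‖ ^ 2 / 2 := by
  rw [norm_sub_sq_real, hx, hy]
  ring

theorem bc_loss_lower_bound_general
    {U I : Type*} (d : ℕ)
    (vU : U → EuclideanSpace ℝ (Fin d)) (vI : I → EuclideanSpace ℝ (Fin d))
    (hU : ∀ u, ‖vU u‖ = 1) (hI : ∀ i, ‖vI i‖ = 1)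
    (Opos : Finset (U × I))
    (N : U → Finset I) (hN : ∀ p ∈ Opos, (N p.1).Nonempty)
    (τ : ℝ) (hτ : 0 < τ)
    (M : U → I → ℝ)
    (θ : U → I → ℝ)
    (hθ : ∀ u i, θ u i = Real.arccos ((inner ℝ (vU u) (vI i) : ℝ)))
    (m : ℝ)
    (hm : ∀ p ∈ Opos,
      Real.cos (θ p.1 p.2 + M p.1 p.2) ≤ (inner ℝ (vU p.1) (vI p.2) : ℝ) - m)
    (LBC : ℝ)
    (hLBC : LBC = -∑ p ∈ Opos, Real.log
      (Real.exp (Real.cos (θ p.1 p.2 + M p.1 p.2) / τ) /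
        (Real.exp (Real.cos (θ p.1 p.2 + M p.1 p.2) / τ) +
          ∑ j ∈ N p.1, Real.exp (Real.cos (θ p.1 j) / τ)))) :
    LBC ≥ ∑ p ∈ Opos,
      (‖vU p.1 - vI p.2‖ ^ 2 / (2 * τ) + m / τ + Real.log ((N p.1).card) -
        (1 / (2 * τ * (N p.1).card)) * ∑ j ∈ N p.1, ‖vU p.1 - vI j‖ ^ 2) := by
  have hcos u i : cos (θ u i) = 1 - ‖vU u - vI i‖ ^ 2 / 2 := by
    rw [hθ, cos_arccos (neg_one_le_real_inner_of_norm_eq_one (hU u) (hI i))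
      (real_inner_le_one_of_norm_eq_one (hU u) (hI i)),
      real_inner_eq_one_sub_norm_sub_sq_div_two (hU u) (hI i)]
  rw [hLBC, ge_iff_le, ← sum_neg_distrib]
  refine sum_le_sum fun p hp => le_trans ?_
    (log_card_add_sum_div_card_sub_le_neg_log_softmax (hN p hp) _ _)
  have hmargin : cos (θ p.1 p.2 + M p.1 p.2) / τ ≤
      1 / τ - ‖vU p.1 - vI p.2‖ ^ 2 / (2 * τ) - m / τ :=
    calc cos (θ p.1 p.2 + M p.1 p.2) / τ ≤ (1 - ‖vU p.1 - vI p.2‖ ^ 2 / 2 - m) / τ := by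
          gcongr
          exact real_inner_eq_one_sub_norm_sub_sq_div_two (hU p.1) (hI p.2) ▸ hm p hp
      _ = 1 / τ - ‖vU p.1 - vI p.2‖ ^ 2 / (2 * τ) - m / τ := by field_simp
  have hmean : (∑ j ∈ N p.1, cos (θ p.1 j) / τ) / #(N p.1) =
      1 / τ - 1 / (2 * τ * #(N p.1)) * ∑ j ∈ N p.1, ‖vU p.1 - vI j‖ ^ 2 := by
    simp_rw [hcos, ← sum_div, sum_sub_distrib, sum_const, nsmul_eq_mul, ← sum_div]
    field_simp
  linarith

/-- The BC loss is bounded below by a compactness term (sum of squared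
distances of positive user–item pairs) minus a dispersion term (average squared
distances from each user to its negative items), up to explicit constants. -/
theorem bc_loss_lower_bound
    {U I : Type*} (d : ℕ)
    (vU : U → EuclideanSpace ℝ (Fin d)) (vI : I → EuclideanSpace ℝ (Fin d))
    (hU : ∀ u, ‖vU u‖ = 1) (hI : ∀ i, ‖vI i‖ = 1)
    (Opos : Finset (U × I)) (hO : Opos.Nonempty)
    (N : U → Finset I) (hN : ∀ p ∈ Opos, (N p.1).Nonempty)
    (τ : ℝ) (hτ : 0 < τ)
    (M : U → I → ℝ) (hM : ∀ p ∈ Opos, 0 ≤ M p.1 p.2)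
    (θ : U → I → ℝ)
    (hθ : ∀ u i, θ u i = Real.arccos ((inner ℝ (vU u) (vI i) : ℝ)))
    (m : ℝ)
    (hm : ∀ p ∈ Opos,
      Real.cos (θ p.1 p.2 + M p.1 p.2) ≤ (inner ℝ (vU p.1) (vI p.2) : ℝ) - m)
    (LBC : ℝ)
    (hLBC : LBC = -∑ p ∈ Opos, Real.log
      (Real.exp (Real.cos (θ p.1 p.2 + M p.1 p.2) / τ) /
        (Real.exp (Real.cos (θ p.1 p.2 + M p.1 p.2) / τ) +
          ∑ j ∈ N p.1, Real.exp (Real.cos (θ p.1 j) / τ)))) :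
    LBC ≥ ∑ p ∈ Opos,
      (‖vU p.1 - vI p.2‖ ^ 2 / (2 * τ) + m / τ + Real.log ((N p.1).card) -
        (1 / (2 * τ * (N p.1).card)) * ∑ j ∈ N p.1, ‖vU p.1 - vI j‖ ^ 2) :=
  bc_loss_lower_bound_general d vU vI hU hI Opos N hN τ hτ M θ hθ m hm LBC hLBC
end

section
/- Let L_BC be the BC loss and suppose m ∈ ℝ satisfies cos(θ_ui + M_ui) ≤ ⟨v_u, v_i⟩ − m for every (u,i) ∈ O⁺, and that P_u ≠ ∅ for every user u appearing in O⁺ and P_i ≠ ∅ for every item i appearing in O⁺. With centroids c_u = (1/|P_u|)∑_{i∈P_u} v_i and c_i = (1/|P_i|)∑_{u∈P_i} v_u, one has L_BC ≥ (1/(4τ)) ∑_u |P_u| (‖v_u − c_u‖² + 1 − ‖c_u‖²) + (1/(4τ)) ∑_i |P_i| (‖v_i − c_i‖² + 1 − ‖c_i‖²) + ∑_{(u,i)∈O⁺} [ m/τ + log|N_u| − (1/(2τ|N_u|)) ∑_{j∈N_u} ‖v_u − v_j‖² ], where the user sum runs over users with P_u ≠ ∅ and the item sum over items with P_i ≠ ∅.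 -/
/-!
Each summand of the loss is a softmax cross-entropy, hence at least `log |N_u|` plus the mean
negative logit minus the positive logit (Jensen for `exp`). For unit vectors
`⟪x, y⟫ = 1 - ‖x - y‖² / 2`, which turns all logits into squared distances. Half of the positive
distances `∑_{O⁺} ‖v_u - v_i‖²` is regrouped by users and the other half by items; around its
centroid `c`, each group sums to `|P| (‖v - c‖² + 1 - ‖c‖²)` by the parallel-axis identity.
-/

open Real BigOperators

open Finset

theorem Real.log_card_add_mean_le_log_sum_exp {ι : Type*} {s : Finset ι} (hs : s.Nonempty)
    (x : ι → ℝ) :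
    log #s + (#s : ℝ)⁻¹ * ∑ j ∈ s, x j ≤ log (∑ j ∈ s, exp (x j)) := by
  have hn : (0 : ℝ) < #s := by exact_mod_cast hs.card_pos
  have jensen : exp (∑ j ∈ s, (#s : ℝ)⁻¹ • x j) ≤ ∑ j ∈ s, (#s : ℝ)⁻¹ • exp (x j) :=
    convexOn_exp.map_sum_le (fun _ _ => by positivity)
      (by simp [sum_const, nsmul_eq_mul, hn.ne']) (fun _ _ => Set.mem_univ _)
  simp only [smul_eq_mul, ← mul_sum] at jensen
  rw [← log_exp ((#s : ℝ)⁻¹ * _), ← log_mul hn.ne' (exp_pos _).ne']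
  gcongr
  rwa [le_inv_mul_iff₀ hn] at jensen

theorem Real.neg_log_softmax_ge {ι : Type*} {s : Finset ι} (hs : s.Nonempty) (a : ℝ)
    (x : ι → ℝ) :
    log #s + (#s : ℝ)⁻¹ * ∑ j ∈ s, x j - a ≤
      -log (exp a / (exp a + ∑ j ∈ s, exp (x j))) := by
  have hS : 0 < ∑ j ∈ s, exp (x j) := sum_pos (fun _ _ => exp_pos _) hs
  rw [log_div (exp_ne_zero a) (by positivity), log_exp, neg_sub]
  have := log_le_log hS (le_add_of_nonneg_left (exp_pos a).le)
  linarith [log_card_add_mean_le_log_sum_exp hs x]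

section Centroid

variable {ι E : Type*} [NormedAddCommGroup E] [InnerProductSpace ℝ E]

theorem sum_norm_sub_sq_eq_card_mul_norm_sub_centroid_sq (v : E) (s : Finset ι) (f : ι → E) :
    ∑ a ∈ s, ‖v - f a‖ ^ 2 =
      #s * ‖v - (#s : ℝ)⁻¹ • ∑ a ∈ s, f a‖ ^ 2 + ∑ a ∈ s, ‖f a‖ ^ 2
        - #s * ‖(#s : ℝ)⁻¹ • ∑ a ∈ s, f a‖ ^ 2 := by
  rcases s.eq_empty_or_nonempty with rfl | hs
  · simp
  have hn : (#s : ℝ) ≠ 0 := by exact_mod_cast hs.card_pos.ne'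
  simp only [norm_sub_sq_real, sum_add_distrib, sum_sub_distrib, inner_sum, ← mul_sum, sum_const,
    nsmul_eq_mul, inner_smul_right, norm_smul, norm_inv, Real.norm_natCast]
  field_simp
  ring

theorem sum_norm_sub_sq_eq_card_mul_of_norm_eq_one (v : E) (s : Finset ι) {f : ι → E}
    (hf : ∀ a ∈ s, ‖f a‖ = 1) :
    ∑ a ∈ s, ‖v - f a‖ ^ 2 =
      #s * (‖v - (#s : ℝ)⁻¹ • ∑ a ∈ s, f a‖ ^ 2 + 1 - ‖(#s : ℝ)⁻¹ • ∑ a ∈ s, f a‖ ^ 2) := by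
  rw [sum_norm_sub_sq_eq_card_mul_norm_sub_centroid_sq,
    sum_eq_card_nsmul (f := fun a => ‖f a‖ ^ 2) (b := 1) fun a ha => by rw [hf a ha, one_pow],
    nsmul_one]
  ring

end Centroid

section UnitVectors

open scoped RealInnerProductSpace

variable {ι E : Type*} [NormedAddCommGroup E] [InnerProductSpace ℝ E] {v w : E}

theorem real_inner_eq_one_sub_norm_sub_sq_div_two_s1 (hv : ‖v‖ = 1) (hw : ‖w‖ = 1) :
    ⟪v, w⟫ = 1 - ‖v - w‖ ^ 2 / 2 := by
  rw [norm_sub_sq_real, hv, hw]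
  ring

theorem cos_arccos_real_inner (hv : ‖v‖ = 1) (hw : ‖w‖ = 1) : cos (arccos ⟪v, w⟫) = ⟪v, w⟫ := by
  have h := abs_real_inner_le_norm v w
  rw [hv, hw, mul_one] at h
  exact cos_arccos (neg_le_of_abs_le h) (le_of_abs_le h)

theorem neg_log_softmax_real_inner_ge {s : Finset ι} (hs : s.Nonempty) {w₀ : ι → E}
    (hv : ‖v‖ = 1) (hw : ‖w‖ = 1) (hw₀ : ∀ j ∈ s, ‖w₀ j‖ = 1) {τ : ℝ} (hτ : 0 < τ) {c m : ℝ}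
    (hc : c ≤ ⟪v, w⟫ - m) :
    m / τ + log #s - 1 / (2 * τ * #s) * ∑ j ∈ s, ‖v - w₀ j‖ ^ 2 + 1 / (2 * τ) * ‖v - w‖ ^ 2 ≤
      -log (exp (c / τ) / (exp (c / τ) + ∑ j ∈ s, exp (⟪v, w₀ j⟫ / τ))) := by
  have hn : (0 : ℝ) < #s := by exact_mod_cast hs.card_pos
  have mean_eq : (#s : ℝ)⁻¹ * ∑ j ∈ s, ⟪v, w₀ j⟫ / τ =
      1 / τ - 1 / (2 * τ * #s) * ∑ j ∈ s, ‖v - w₀ j‖ ^ 2 := by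
    rw [sum_congr rfl fun j hj => by rw [real_inner_eq_one_sub_norm_sub_sq_div_two_s1 hv (hw₀ j hj)],
      ← sum_div, sum_sub_distrib, ← sum_div, sum_const, nsmul_one]
    field_simp
  have hc' : c / τ ≤ 1 / τ - 1 / (2 * τ) * ‖v - w‖ ^ 2 - m / τ := by
    rw [real_inner_eq_one_sub_norm_sub_sq_div_two_s1 hv hw] at hc
    calc c / τ ≤ (1 - ‖v - w‖ ^ 2 / 2 - m) / τ := by gcongr
      _ = _ := by ring
  linarith [neg_log_softmax_ge hs (c / τ) fun j => ⟪v, w₀ j⟫ / τ]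

end UnitVectors

namespace Finset

variable {α β M : Type*} [AddCommMonoid M]

theorem sum_eq_sum_filter_nonempty_sum_left [Fintype α] (r : Finset (α × β)) (t : α → Finset β)
    (ht : ∀ a b, b ∈ t a ↔ (a, b) ∈ r) (f : α → β → M) :
    ∑ p ∈ r, f p.1 p.2 = ∑ a ∈ univ.filter (fun a => (t a).Nonempty), ∑ b ∈ t a, f a b := by
  rw [sum_finset_product' r univ t (fun p => by simp [ht p.1 p.2]), sum_filter_of_ne]
  exact fun a _ h => nonempty_of_sum_ne_zero h

theorem sum_eq_sum_filter_nonempty_sum_right [Fintype β] (r : Finset (α × β)) (t : β → Finset α)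
    (ht : ∀ b a, a ∈ t b ↔ (a, b) ∈ r) (f : α → β → M) :
    ∑ p ∈ r, f p.1 p.2 = ∑ b ∈ univ.filter (fun b => (t b).Nonempty), ∑ a ∈ t b, f a b := by
  rw [sum_finset_product_right' r univ t (fun p => by simp [ht p.2 p.1]), sum_filter_of_ne]
  exact fun b _ h => nonempty_of_sum_ne_zero h

end Finset

theorem bc_loss_centroid_lower_bound_general
    {U I : Type*} [Fintype U] [Fintype I] (d : ℕ)
    (vU : U → EuclideanSpace ℝ (Fin d)) (vI : I → EuclideanSpace ℝ (Fin d))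
    (hU : ∀ u, ‖vU u‖ = 1) (hI : ∀ i, ‖vI i‖ = 1)
    (Opos : Finset (U × I))
    (Pu : U → Finset I) (hPu : ∀ u i, i ∈ Pu u ↔ (u, i) ∈ Opos)
    (Pi : I → Finset U) (hPi : ∀ i u, u ∈ Pi i ↔ (u, i) ∈ Opos)
    (cU : U → EuclideanSpace ℝ (Fin d))
    (hcU : ∀ u, (Pu u).Nonempty → cU u = (((Pu u).card : ℝ))⁻¹ • ∑ i ∈ Pu u, vI i)
    (cI : I → EuclideanSpace ℝ (Fin d))
    (hcI : ∀ i, (Pi i).Nonempty → cI i = (((Pi i).card : ℝ))⁻¹ • ∑ u ∈ Pi i, vU u)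
    (N : U → Finset I) (hN : ∀ p ∈ Opos, (N p.1).Nonempty)
    (τ : ℝ) (hτ : 0 < τ)
    (M : U → I → ℝ)
    (θ : U → I → ℝ)
    (hθ : ∀ u i, θ u i = Real.arccos ((inner ℝ (vU u) (vI i) : ℝ)))
    (m : ℝ)
    (hm : ∀ p ∈ Opos,
      Real.cos (θ p.1 p.2 + M p.1 p.2) ≤ (inner ℝ (vU p.1) (vI p.2) : ℝ) - m)
    (LBC : ℝ)
    (hLBC : LBC = -∑ p ∈ Opos, Real.log
      (Real.exp (Real.cos (θ p.1 p.2 + M p.1 p.2) / τ) /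
        (Real.exp (Real.cos (θ p.1 p.2 + M p.1 p.2) / τ) +
          ∑ j ∈ N p.1, Real.exp (Real.cos (θ p.1 j) / τ)))) :
    LBC ≥
      (1 / (4 * τ)) * ∑ u ∈ Finset.univ.filter (fun u => (Pu u).Nonempty),
        ((Pu u).card : ℝ) * (‖vU u - cU u‖ ^ 2 + 1 - ‖cU u‖ ^ 2) +
      (1 / (4 * τ)) * ∑ i ∈ Finset.univ.filter (fun i => (Pi i).Nonempty),
        ((Pi i).card : ℝ) * (‖vI i - cI i‖ ^ 2 + 1 - ‖cI i‖ ^ 2) +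
      ∑ p ∈ Opos,
        (m / τ + Real.log ((N p.1).card) -
          (1 / (2 * τ * (N p.1).card)) * ∑ j ∈ N p.1, ‖vU p.1 - vI j‖ ^ 2) := by
  have hcos : ∀ u j, cos (θ u j) = inner ℝ (vU u) (vI j) := fun u j => by
    rw [hθ, cos_arccos_real_inner (hU u) (hI j)]
  have pair_bound : ∀ p ∈ Opos,
      m / τ + log #(N p.1) - 1 / (2 * τ * #(N p.1)) * ∑ j ∈ N p.1, ‖vU p.1 - vI j‖ ^ 2 +
          1 / (2 * τ) * ‖vU p.1 - vI p.2‖ ^ 2 ≤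
        -log (exp (cos (θ p.1 p.2 + M p.1 p.2) / τ) /
          (exp (cos (θ p.1 p.2 + M p.1 p.2) / τ) + ∑ j ∈ N p.1, exp (cos (θ p.1 j) / τ))) :=
    fun p hp => by
      simp only [hcos]
      exact neg_log_softmax_real_inner_ge (hN p hp) (hU _) (hI _) (fun j _ => hI j) hτ (hm p hp)
  have hsum := sum_le_sum pair_bound
  rw [sum_add_distrib, ← mul_sum, sum_neg_distrib, ← hLBC] at hsum
  have by_users : ∑ p ∈ Opos, ‖vU p.1 - vI p.2‖ ^ 2 =
      ∑ u ∈ univ.filter (fun u => (Pu u).Nonempty),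
        #(Pu u) * (‖vU u - cU u‖ ^ 2 + 1 - ‖cU u‖ ^ 2) := by
    rw [sum_eq_sum_filter_nonempty_sum_left Opos Pu hPu fun u i => ‖vU u - vI i‖ ^ 2]
    refine sum_congr rfl fun u hu => ?_
    rw [hcU u (mem_filter.1 hu).2]
    exact sum_norm_sub_sq_eq_card_mul_of_norm_eq_one _ _ fun i _ => hI i
  have by_items : ∑ p ∈ Opos, ‖vU p.1 - vI p.2‖ ^ 2 =
      ∑ i ∈ univ.filter (fun i => (Pi i).Nonempty),
        #(Pi i) * (‖vI i - cI i‖ ^ 2 + 1 - ‖cI i‖ ^ 2) := by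
    rw [sum_eq_sum_filter_nonempty_sum_right Opos Pi hPi fun u i => ‖vU u - vI i‖ ^ 2]
    refine sum_congr rfl fun i hi => ?_
    simp_rw [norm_sub_rev (vU _), hcI i (mem_filter.1 hi).2]
    exact sum_norm_sub_sq_eq_card_mul_of_norm_eq_one _ _ fun u _ => hU u
  rw [ge_iff_le, ← by_users, ← by_items]
  refine Eq.trans_le ?_ hsum
  ring

/-- The BC loss is bounded below by user- and item-centroid compactness
terms plus the dispersion term, up to explicit constants. -/
theorem bc_loss_centroid_lower_bound
    {U I : Type*} [Fintype U] [Fintype I] (d : ℕ)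
    (vU : U → EuclideanSpace ℝ (Fin d)) (vI : I → EuclideanSpace ℝ (Fin d))
    (hU : ∀ u, ‖vU u‖ = 1) (hI : ∀ i, ‖vI i‖ = 1)
    (Opos : Finset (U × I)) (hO : Opos.Nonempty)
    (Pu : U → Finset I) (hPu : ∀ u i, i ∈ Pu u ↔ (u, i) ∈ Opos)
    (Pi : I → Finset U) (hPi : ∀ i u, u ∈ Pi i ↔ (u, i) ∈ Opos)
    (hPune : ∀ p ∈ Opos, (Pu p.1).Nonempty)
    (hPine : ∀ p ∈ Opos, (Pi p.2).Nonempty)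
    (cU : U → EuclideanSpace ℝ (Fin d))
    (hcU : ∀ u, (Pu u).Nonempty → cU u = (((Pu u).card : ℝ))⁻¹ • ∑ i ∈ Pu u, vI i)
    (cI : I → EuclideanSpace ℝ (Fin d))
    (hcI : ∀ i, (Pi i).Nonempty → cI i = (((Pi i).card : ℝ))⁻¹ • ∑ u ∈ Pi i, vU u)
    (N : U → Finset I) (hN : ∀ p ∈ Opos, (N p.1).Nonempty)
    (τ : ℝ) (hτ : 0 < τ)
    (M : U → I → ℝ) (hM : ∀ p ∈ Opos, 0 ≤ M p.1 p.2)
    (θ : U → I → ℝ)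
    (hθ : ∀ u i, θ u i = Real.arccos ((inner ℝ (vU u) (vI i) : ℝ)))
    (m : ℝ)
    (hm : ∀ p ∈ Opos,
      Real.cos (θ p.1 p.2 + M p.1 p.2) ≤ (inner ℝ (vU p.1) (vI p.2) : ℝ) - m)
    (LBC : ℝ)
    (hLBC : LBC = -∑ p ∈ Opos, Real.log
      (Real.exp (Real.cos (θ p.1 p.2 + M p.1 p.2) / τ) /
        (Real.exp (Real.cos (θ p.1 p.2 + M p.1 p.2) / τ) +
          ∑ j ∈ N p.1, Real.exp (Real.cos (θ p.1 j) / τ)))) :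
    LBC ≥
      (1 / (4 * τ)) * ∑ u ∈ Finset.univ.filter (fun u => (Pu u).Nonempty),
        ((Pu u).card : ℝ) * (‖vU u - cU u‖ ^ 2 + 1 - ‖cU u‖ ^ 2) +
      (1 / (4 * τ)) * ∑ i ∈ Finset.univ.filter (fun i => (Pi i).Nonempty),
        ((Pi i).card : ℝ) * (‖vI i - cI i‖ ^ 2 + 1 - ‖cI i‖ ^ 2) +
      ∑ p ∈ Opos,
        (m / τ + Real.log ((N p.1).card) -
          (1 / (2 * τ * (N p.1).card)) * ∑ j ∈ N p.1, ‖vU p.1 - vI j‖ ^ 2) :=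
  bc_loss_centroid_lower_bound_general d vU vI hU hI Opos Pu hPu Pi hPi cU hcU cI hcI N hN τ hτ M θ
    hθ m hm LBC hLBC
end

section
/- If the margins satisfy 0 ≤ M_ui ≤ π − θ_ui for every (u,i) ∈ O⁺, then the BC loss dominates the sampled softmax loss: L_BC ≥ L₀. -/
open Real BigOperators

/-! An angular margin `0 ≤ M ≤ π − θ` keeps `θ + M` inside `[0, π]`, where cosine is
decreasing, so it can only lower the positive logit `cos (θ + M) / τ`. The softmax
probability `a / (a + S)` of the positive item is increasing in its weight `a` for a fixed
negative mass `S ≥ 0`, so every summand of the BC loss dominates the corresponding summand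
of the softmax loss. -/

lemma div_add_le_div_add {a b S : ℝ} (ha : 0 < a) (hab : a ≤ b) (hS : 0 ≤ S) :
    a / (a + S) ≤ b / (b + S) := by
  rw [div_le_div_iff₀ (by positivity) (by linarith)]
  nlinarith

lemma log_div_add_le_log_div_add {a b S : ℝ} (ha : 0 < a) (hab : a ≤ b) (hS : 0 ≤ S) :
    log (a / (a + S)) ≤ log (b / (b + S)) :=
  log_le_log (by positivity) (div_add_le_div_add ha hab hS)

lemma cos_add_le_cos_of_le_pi_sub {θ m : ℝ} (hθ : 0 ≤ θ) (hm : 0 ≤ m) (hmθ : m ≤ π - θ) :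
    cos (θ + m) ≤ cos θ :=
  cos_le_cos_of_nonneg_of_le_pi hθ (by linarith) (by linarith)

theorem bc_loss_ge_softmax_loss_general
    {U I : Type*} (d : ℕ)
    (vU : U → EuclideanSpace ℝ (Fin d)) (vI : I → EuclideanSpace ℝ (Fin d))
    (Opos : Finset (U × I))
    (N : U → Finset I)
    (τ : ℝ) (hτ : 0 < τ)
    (θ : U → I → ℝ)
    (hθ : ∀ u i, θ u i = Real.arccos ((inner ℝ (vU u) (vI i) : ℝ)))
    (M : U → I → ℝ)
    (hM : ∀ p ∈ Opos, 0 ≤ M p.1 p.2 ∧ M p.1 p.2 ≤ π - θ p.1 p.2)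
    (L0 LBC : ℝ)
    (hL0 : L0 = -∑ p ∈ Opos, Real.log
      (Real.exp (Real.cos (θ p.1 p.2) / τ) /
        (Real.exp (Real.cos (θ p.1 p.2) / τ) +
          ∑ j ∈ N p.1, Real.exp (Real.cos (θ p.1 j) / τ))))
    (hLBC : LBC = -∑ p ∈ Opos, Real.log
      (Real.exp (Real.cos (θ p.1 p.2 + M p.1 p.2) / τ) /
        (Real.exp (Real.cos (θ p.1 p.2 + M p.1 p.2) / τ) +
          ∑ j ∈ N p.1, Real.exp (Real.cos (θ p.1 j) / τ)))) :
    LBC ≥ L0 := by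
  subst hL0 hLBC
  rw [ge_iff_le, neg_le_neg_iff]
  refine Finset.sum_le_sum fun p hp => ?_
  obtain ⟨hM0, hMθ⟩ := hM p hp
  have hcos : cos (θ p.1 p.2 + M p.1 p.2) ≤ cos (θ p.1 p.2) :=
    cos_add_le_cos_of_le_pi_sub (hθ p.1 p.2 ▸ arccos_nonneg _) hM0 hMθ
  exact log_div_add_le_log_div_add (exp_pos _)
    (exp_le_exp.mpr (div_le_div_of_nonneg_right hcos hτ.le))
    (Finset.sum_nonneg fun _ _ => (exp_pos _).le)

/-- If the margins satisfy `0 ≤ M_ui ≤ π − θ_ui` for every `(u,i) ∈ O⁺`,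
then the BC loss dominates the sampled softmax loss: `L_BC ≥ L₀`. -/
theorem bc_loss_ge_softmax_loss
    {U I : Type*} (d : ℕ)
    (vU : U → EuclideanSpace ℝ (Fin d)) (vI : I → EuclideanSpace ℝ (Fin d))
    (hU : ∀ u, ‖vU u‖ = 1) (hI : ∀ i, ‖vI i‖ = 1)
    (Opos : Finset (U × I)) (hO : Opos.Nonempty)
    (N : U → Finset I) (hN : ∀ p ∈ Opos, (N p.1).Nonempty)
    (τ : ℝ) (hτ : 0 < τ)
    (θ : U → I → ℝ)
    (hθ : ∀ u i, θ u i = Real.arccos ((inner ℝ (vU u) (vI i) : ℝ)))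
    (M : U → I → ℝ)
    (hM : ∀ p ∈ Opos, 0 ≤ M p.1 p.2 ∧ M p.1 p.2 ≤ π - θ p.1 p.2)
    (L0 LBC : ℝ)
    (hL0 : L0 = -∑ p ∈ Opos, Real.log
      (Real.exp (Real.cos (θ p.1 p.2) / τ) /
        (Real.exp (Real.cos (θ p.1 p.2) / τ) +
          ∑ j ∈ N p.1, Real.exp (Real.cos (θ p.1 j) / τ))))
    (hLBC : LBC = -∑ p ∈ Opos, Real.log
      (Real.exp (Real.cos (θ p.1 p.2 + M p.1 p.2) / τ) /
        (Real.exp (Real.cos (θ p.1 p.2 + M p.1 p.2) / τ) +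
          ∑ j ∈ N p.1, Real.exp (Real.cos (θ p.1 j) / τ)))) :
    LBC ≥ L0 :=
  bc_loss_ge_softmax_loss_general d vU vI Opos N τ hτ θ hθ M hM L0 LBC hL0 hLBC
end

section
/- Let O⁺ ⊆ U × I be a finite set of user–item pairs with unit vectors v_u, v_i ∈ ℝ^d, and for u ∈ U with P_u = {i : (u,i) ∈ O⁺} ≠ ∅ let c_u = (1/|P_u|)∑_{i∈P_u} v_i, and for i ∈ I with P_i = {u : (u,i) ∈ O⁺} ≠ ∅ let c_i = (1/|P_i|)∑_{u∈P_i} v_u. Then ∑_{(u,i)∈O⁺} ‖v_u − v_i‖² = (1/2) ∑_{u : P_u ≠ ∅} |P_u| ( ‖v_u − c_u‖² + 1 − ‖c_u‖² ) + (1/2) ∑_{i : P_i ≠ ∅} |P_i| ( ‖v_i − c_i‖² + 1 − ‖c_i‖² ); that is, the total squared distance over positive interactions decomposes symmetrically into a user-centroid compactness term and an item-centroid compactness term. -/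
open Real BigOperators

/-!
Each positive pair is counted once from the user side and once from the item side, so the total is
half the sum of the two fiberwise totals. For a fixed user, expanding squares gives the parallel-axis
identity `∑ᵢ ‖v_u - v_i‖² = |P_u| ‖v_u - c_u‖² + ∑ᵢ ‖v_i‖² - |P_u| ‖c_u‖²`, and `∑ᵢ ‖v_i‖² = |P_u|`
for unit vectors; symmetrically for items.
-/

namespace Finset

variable {α β M : Type*} [AddCommMonoid M]

theorem sum_eq_sum_filter_nonempty_fiber_left [Fintype α] (s : Finset (α × β))
    (t : α → Finset β) (ht : ∀ a b, b ∈ t a ↔ (a, b) ∈ s) (f : α → β → M) :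
    ∑ p ∈ s, f p.1 p.2 = ∑ a ∈ univ.filter (fun a => (t a).Nonempty), ∑ b ∈ t a, f a b := by
  refine sum_finset_product' s _ t fun p => ?_
  simp only [mem_filter, mem_univ, true_and, ht]
  exact ⟨fun h => ⟨⟨p.2, (ht _ _).2 h⟩, h⟩, And.right⟩

theorem sum_eq_sum_filter_nonempty_fiber_right [Fintype β] (s : Finset (α × β))
    (t : β → Finset α) (ht : ∀ b a, a ∈ t b ↔ (a, b) ∈ s) (f : α → β → M) :
    ∑ p ∈ s, f p.1 p.2 = ∑ b ∈ univ.filter (fun b => (t b).Nonempty), ∑ a ∈ t b, f a b := by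
  refine sum_finset_product_right' s _ t fun p => ?_
  simp only [mem_filter, mem_univ, true_and, ht]
  exact ⟨fun h => ⟨⟨p.1, (ht _ _).2 h⟩, h⟩, And.right⟩

end Finset

section ParallelAxis

variable {E ι : Type*} [NormedAddCommGroup E] [InnerProductSpace ℝ E]

theorem sum_norm_sub_sq_eq_of_card_smul_eq_sum (s : Finset ι) (w : ι → E) (v c : E)
    (hc : (s.card : ℝ) • c = ∑ a ∈ s, w a) :
    ∑ a ∈ s, ‖v - w a‖ ^ 2 =
      s.card * ‖v - c‖ ^ 2 + ∑ a ∈ s, ‖w a‖ ^ 2 - s.card * ‖c‖ ^ 2 := by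
  have hvc : (s.card : ℝ) * inner ℝ v c = ∑ a ∈ s, inner ℝ v (w a) := by
    rw [← real_inner_smul_right, hc, inner_sum]
  simp only [norm_sub_sq_real, Finset.sum_add_distrib, Finset.sum_sub_distrib, Finset.sum_const,
    nsmul_eq_mul, ← Finset.mul_sum, ← hvc]
  ring

theorem card_mul_centroid_compactness_eq_sum_norm_sub_sq (s : Finset ι)
    (w : ι → E) (hw : ∀ a ∈ s, ‖w a‖ = 1) (v : E) :
    (s.card : ℝ) * (‖v - (s.card : ℝ)⁻¹ • ∑ a ∈ s, w a‖ ^ 2 + 1 -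
        ‖(s.card : ℝ)⁻¹ • ∑ a ∈ s, w a‖ ^ 2) = ∑ a ∈ s, ‖v - w a‖ ^ 2 := by
  have hc : (s.card : ℝ) • ((s.card : ℝ)⁻¹ • ∑ a ∈ s, w a) = ∑ a ∈ s, w a := by
    rcases s.eq_empty_or_nonempty with rfl | hs
    · simp
    · exact smul_inv_smul₀ (by exact_mod_cast hs.card_pos.ne') _
  have hsq : ∑ a ∈ s, ‖w a‖ ^ 2 = s.card := by
    rw [Finset.sum_eq_card_nsmul fun a ha => by rw [hw a ha, one_pow], nsmul_one]
  rw [sum_norm_sub_sq_eq_of_card_smul_eq_sum s w v _ hc, hsq]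
  ring

end ParallelAxis

/-- The total squared distance over positive interactions decomposes
symmetrically into a user-centroid compactness term and an item-centroid
compactness term. -/
theorem sum_sq_dist_symmetric_centroid_decomposition
    {U I : Type*} [Fintype U] [Fintype I] (d : ℕ)
    (vU : U → EuclideanSpace ℝ (Fin d)) (vI : I → EuclideanSpace ℝ (Fin d))
    (hU : ∀ u, ‖vU u‖ = 1) (hI : ∀ i, ‖vI i‖ = 1)
    (Opos : Finset (U × I))
    (Pu : U → Finset I) (hPu : ∀ u i, i ∈ Pu u ↔ (u, i) ∈ Opos)
    (Pi : I → Finset U) (hPi : ∀ i u, u ∈ Pi i ↔ (u, i) ∈ Opos)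
    (cU : U → EuclideanSpace ℝ (Fin d))
    (hcU : ∀ u, (Pu u).Nonempty → cU u = (((Pu u).card : ℝ))⁻¹ • ∑ i ∈ Pu u, vI i)
    (cI : I → EuclideanSpace ℝ (Fin d))
    (hcI : ∀ i, (Pi i).Nonempty → cI i = (((Pi i).card : ℝ))⁻¹ • ∑ u ∈ Pi i, vU u) :
    ∑ p ∈ Opos, ‖vU p.1 - vI p.2‖ ^ 2 =
      (1 / 2) * ∑ u ∈ Finset.univ.filter (fun u => (Pu u).Nonempty),
        ((Pu u).card : ℝ) * (‖vU u - cU u‖ ^ 2 + 1 - ‖cU u‖ ^ 2) +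
      (1 / 2) * ∑ i ∈ Finset.univ.filter (fun i => (Pi i).Nonempty),
        ((Pi i).card : ℝ) * (‖vI i - cI i‖ ^ 2 + 1 - ‖cI i‖ ^ 2) := by
  have hUsers : ∑ p ∈ Opos, ‖vU p.1 - vI p.2‖ ^ 2 =
      ∑ u ∈ Finset.univ.filter (fun u => (Pu u).Nonempty),
        ((Pu u).card : ℝ) * (‖vU u - cU u‖ ^ 2 + 1 - ‖cU u‖ ^ 2) := by
    rw [Finset.sum_eq_sum_filter_nonempty_fiber_left Opos Pu hPu fun u i => ‖vU u - vI i‖ ^ 2]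
    refine Finset.sum_congr rfl fun u hu => ?_
    have hne := (Finset.mem_filter.mp hu).2
    rw [hcU u hne, card_mul_centroid_compactness_eq_sum_norm_sub_sq _ _ fun i _ => hI i]
  have hItems : ∑ p ∈ Opos, ‖vU p.1 - vI p.2‖ ^ 2 =
      ∑ i ∈ Finset.univ.filter (fun i => (Pi i).Nonempty),
        ((Pi i).card : ℝ) * (‖vI i - cI i‖ ^ 2 + 1 - ‖cI i‖ ^ 2) := by
    rw [Finset.sum_eq_sum_filter_nonempty_fiber_right Opos Pi hPi fun u i => ‖vU u - vI i‖ ^ 2]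
    refine Finset.sum_congr rfl fun i hi => ?_
    have hne := (Finset.mem_filter.mp hi).2
    rw [hcI i hne, card_mul_centroid_compactness_eq_sum_norm_sub_sq _ _ fun u _ => hU u]
    simp only [norm_sub_rev]
  linarith
end
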